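/- Let (Σ,P) be a Kelvin–Planck theory having an essentially unique Clausius–Duhem pair (η⁰,T⁰) (i.e., every Clausius–Duhem pair (η,T) satisfies T = αT⁰ and η = (1/α)η⁰ + β for some α > 0, β ∈ ℝ). Then: (1) the set of reversible elements of \hat{P} coincides with the set of all (Δm,q) ∈ V(Σ) satisfying ∫_Σ η⁰ d(Δm) = ∫_Σ (1/T⁰) dq; (2) if even one member of {(Δm,q) ∈ V(Σ) : ∫_Σ η⁰ d(Δm) > ∫_Σ (1/T⁰) dq} belongs to \hat{P}, then all do; (3) if P contains at least one irreversible process, then \hat{P} contains every member of V(Σ) satisfying ∫_Σ η⁰ d(Δm) ≥ ∫_Σ (1/T⁰) dq. -/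

import Mathlib

open Set

noncomputable section

/-- Signed regular Borel measures on `X`, modeled via the Riesz representation
theorem as the weak-star dual of `C(X, ℝ)`. -/
abbrev Meas (X : Type*) [TopologicalSpace X] := WeakDual ℝ C(X, ℝ)

/-- The ambient space containing `V(X) = M°(X) ⊕ M(X)`; membership in the
subspace `M°(X)` of the first component is expressed by `p.1 1 = 0`. -/
abbrev VSp (X : Type*) [TopologicalSpace X] := Meas X × Meas X

/-- The cone of nonnegative measures. -/
def PosMeas (X : Type*) [TopologicalSpace X] : Set (Meas X) :=
  {μ | ∀ f : C(X, ℝ), (∀ x, 0 ≤ f x) → 0 ≤ μ f}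

variable {X : Type*} [TopologicalSpace X]

/-- The Dirac measure at a point, i.e. the evaluation functional. -/
def dirac (x : X) : Meas X :=
  (⟨⟨⟨fun f => f x, fun _ _ => rfl⟩, fun _ _ => rfl⟩,
    continuous_eval_const x⟩ : C(X, ℝ) →L[ℝ] ℝ)

/-- The set of nonnegative multiples of members of `P`. -/
def coneOf (P : Set (VSp X)) : Set (VSp X) :=
  {x | ∃ c : ℝ, 0 ≤ c ∧ ∃ p ∈ P, x = c • p}

/-- `\hat P`, the weak-star closure of the cone generated by `P`. -/
def hatP (P : Set (VSp X)) : Set (VSp X) :=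
  closure (coneOf P)

/-- A thermodynamical theory: processes have change of condition with total mass
zero (i.e. `P ⊆ V(X)`), and `\hat P` is convex. -/
def IsThermoTheory (P : Set (VSp X)) : Prop :=
  (∀ p ∈ P, p.1 (1 : C(X, ℝ)) = 0) ∧ Convex ℝ (hatP P)

/-- A Kelvin–Planck theory: a thermodynamical theory with
`\hat P ∩ ({0} × M₊(X)) = {(0,0)}`. -/
def IsKelvinPlanck (P : Set (VSp X)) : Prop :=
  IsThermoTheory P ∧ hatP P ∩ (({0} : Set (Meas X)) ×ˢ PosMeas X) = {(0, 0)}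

/-- A Clausius–Duhem pair `(η, T)` for the theory `P`: `η` and `T` are continuous,
`T` is strictly positive, and for every continuous `β` equal pointwise to `1/T`
(such a `β` exists, and is unique, by positivity of `T`), the Clausius–Duhem
inequality `∫ η d(Δm) ≥ ∫ (1/T) dq` holds for every process in `P`. -/
def IsCDPair (P : Set (VSp X)) (η T : C(X, ℝ)) : Prop :=
  (∀ x, 0 < T x) ∧
    ∀ β : C(X, ℝ), (∀ x, β x = (T x)⁻¹) → ∀ p ∈ P, p.2 β ≤ p.1 η

/-- A Clausius–Duhem temperature scale. -/
def IsCDTemp (P : Set (VSp X)) (T : C(X, ℝ)) : Prop :=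
  ∃ η : C(X, ℝ), IsCDPair P η T

/-- Two states are of the same hotness: both `(0, δ_a − δ_b)` and `(0, δ_b − δ_a)`
belong to `\hat P`. -/
def SameHotness (P : Set (VSp X)) (a b : X) : Prop :=
  ((0 : Meas X), dirac a - dirac b) ∈ hatP P ∧
    ((0 : Meas X), dirac b - dirac a) ∈ hatP P

/-- The hotness level of a state. -/
def hotnessLevel (P : Set (VSp X)) (a : X) : Set X :=
  {b | SameHotness P a b}

/-- A subset of the state space that is a hotness level. -/
def IsHotnessLevel (P : Set (VSp X)) (h : Set X) : Prop :=
  ∃ a : X, h = hotnessLevel P a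

/-- The (signed) measure `μ` is supported in the set `A`: `μ` annihilates every
continuous function vanishing on `A`. -/
def SuppIn (μ : Meas X) (A : Set X) : Prop :=
  ∀ f : C(X, ℝ), (∀ x ∈ A, f x = 0) → μ f = 0

/-- `\hat Q` contains a passive heat transfer from hotness level `h` to `h'`:
an element `(0, μ − μ')` of `\hat Q` with `μ, μ'` nonnegative, `supp μ ⊆ h`,
`supp μ' ⊆ h'` and `μ(h) = μ'(h') > 0` (the common value being the total mass). -/
def IsPassiveHT (Q : Set (VSp X)) (h h' : Set X) : Prop :=
  ∃ μ μ' : Meas X, μ ∈ PosMeas X ∧ μ' ∈ PosMeas X ∧ SuppIn μ h ∧ SuppIn μ' h' ∧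
    μ (1 : C(X, ℝ)) = μ' (1 : C(X, ℝ)) ∧ 0 < μ (1 : C(X, ℝ)) ∧
    ((0 : Meas X), μ - μ') ∈ hatP Q

/-- Hotness level `h'` is hotter than `h`: the levels are distinct and every
thermodynamical theory whose closed process cone contains `P` together with a
passive heat transfer from `h` to `h'` fails to be a Kelvin–Planck theory. -/
def Hotter (P : Set (VSp X)) (h' h : Set X) : Prop :=
  h' ≠ h ∧ ∀ Pd : Set (VSp X), IsThermoTheory Pd → P ⊆ hatP Pd →
    IsPassiveHT Pd h h' → ¬ IsKelvinPlanck Pd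

/-- State `a` is hotter than state `b`. -/
def HotterState (P : Set (VSp X)) (a b : X) : Prop :=
  Hotter P (hotnessLevel P a) (hotnessLevel P b)

/-- A Carnot element of the theory `P` operating between hotness levels `h'` and
`h`: a reversible cyclic element `(0, μ' − μ)` with `μ', μ` nonzero nonnegative
measures supported in `h'`, `h` respectively. -/
def IsCarnotBetween (P : Set (VSp X)) (h' h : Set X) (p : VSp X) : Prop :=
  p ∈ hatP P ∧ -p ∈ hatP P ∧
    ∃ μ' μ : Meas X, μ' ∈ PosMeas X ∧ μ ∈ PosMeas X ∧ μ' ≠ 0 ∧ μ ≠ 0 ∧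
      SuppIn μ' h' ∧ SuppIn μ h ∧ p = ((0 : Meas X), μ' - μ)

end

/-!
`\hat P` is a closed convex cone in the locally convex space `V(X)` (weak-star topology), so by
Farkas' lemma it is cut out by the continuous functionals that are nonnegative on it, and these
are all of the form `(Δm, q) ↦ ∫ g dΔm - ∫ h dq`. If such a functional is nonnegative on `P`, then
`(η⁰ + ε g, 1 / (β⁰ + ε h))` is again a Clausius–Duhem pair for small `ε > 0`; uniqueness forces
`h` to be a multiple of `β⁰` and `g` the same multiple of `η⁰` plus a constant. Hence, on
mass-free elements, every functional nonnegative on `\hat P` is a multiple of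
`S = ∫ η⁰ dΔm - ∫ β⁰ dq`, so `\hat P` is either `{S = 0}` or `{S ≥ 0}` within `V(X)`.
-/

instance WeakDual.instLocallyConvexSpace {E : Type*} [AddCommGroup E] [Module ℝ E]
    [TopologicalSpace E] : LocallyConvexSpace ℝ (WeakDual ℝ E) :=
  WeakBilin.locallyConvexSpace

theorem WeakDual.exists_eq_eval {E : Type*} [AddCommGroup E] [Module ℝ E] [TopologicalSpace E]
    (f : StrongDual ℝ (WeakDual ℝ E)) : ∃ g : E, ∀ μ : WeakDual ℝ E, f μ = μ g := by
  obtain ⟨g, rfl⟩ := LinearMap.dualEmbedding_surjective (topDualPairing ℝ E) f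
  exact ⟨g, fun _ => rfl⟩

section Thermodynamics

variable {X : Type*} [TopologicalSpace X] {P : Set (VSp X)}

noncomputable def cdForm (η β : C(X, ℝ)) : StrongDual ℝ (VSp X) where
  toFun p := p.1 η - p.2 β
  map_add' _ _ := add_sub_add_comm ..
  map_smul' _ _ := (mul_sub ..).symm
  cont := ((WeakDual.eval_continuous η).comp continuous_fst).sub
    ((WeakDual.eval_continuous β).comp continuous_snd)

@[simp]
theorem cdForm_apply (η β : C(X, ℝ)) (p : VSp X) : cdForm η β p = p.1 η - p.2 β := rfl

theorem exists_eq_cdForm (f : StrongDual ℝ (VSp X)) : ∃ g h : C(X, ℝ), f = cdForm g h := by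
  obtain ⟨g, hg⟩ := WeakDual.exists_eq_eval (f.comp (.inl ℝ (Meas X) (Meas X)))
  obtain ⟨h, hh⟩ := WeakDual.exists_eq_eval (f.comp (.inr ℝ (Meas X) (Meas X)))
  refine ⟨g, -h, ContinuousLinearMap.ext fun p => ?_⟩
  rw [← Prod.fst_add_snd p, map_add]
  simp [← hg, ← hh]

theorem subset_hatP (P : Set (VSp X)) : P ⊆ hatP P :=
  fun p hp => subset_closure ⟨1, zero_le_one, p, hp, (one_smul ℝ p).symm⟩

theorem smul_mem_hatP {c : ℝ} (hc : 0 ≤ c) {p : VSp X} (hp : p ∈ hatP P) : c • p ∈ hatP P := by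
  refine MapsTo.closure (fun q hq => ?_) (continuous_const_smul c) hp
  obtain ⟨d, hd, p', hp', rfl⟩ := hq
  exact ⟨c * d, mul_nonneg hc hd, p', hp', smul_smul c d p'⟩

theorem nonneg_of_mem_hatP {f : StrongDual ℝ (VSp X)} (hf : ∀ p ∈ P, 0 ≤ f p) {p : VSp X}
    (hp : p ∈ hatP P) : 0 ≤ f p := by
  refine closure_minimal (fun q hq => ?_) (isClosed_le continuous_const f.continuous) hp
  obtain ⟨c, hc, p', hp', rfl⟩ := hq
  show 0 ≤ f (c • p')
  simpa only [map_smul, smul_eq_mul] using mul_nonneg hc (hf p' hp')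

theorem IsThermoTheory.mass_eq_zero (hP : IsThermoTheory P) {p : VSp X} (hp : p ∈ hatP P) :
    p.1 1 = 0 := by
  refine closure_minimal (fun q hq => ?_)
    (isClosed_eq ((WeakDual.eval_continuous 1).comp continuous_fst) continuous_const) hp
  obtain ⟨c, -, p', hp', rfl⟩ := hq
  show c * p'.1 1 = 0
  rw [hP.1 p' hp', mul_zero]

theorem IsCDPair.le_of_mem_hatP {η T β : C(X, ℝ)} (hCD : IsCDPair P η T)
    (hβ : ∀ x, β x = (T x)⁻¹) {p : VSp X} (hp : p ∈ hatP P) : p.2 β ≤ p.1 η :=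
  sub_nonneg.mp <| nonneg_of_mem_hatP (f := cdForm η β)
    (fun q hq => sub_nonneg.mpr (hCD.2 β hβ q hq)) hp

theorem IsKelvinPlanck.zero_mem_hatP (hP : IsKelvinPlanck P) : (0 : VSp X) ∈ hatP P :=
  (hP.2.ge (mem_singleton _)).1

def IsThermoTheory.properCone (hP : IsThermoTheory P) (h0 : (0 : VSp X) ∈ hatP P) :
    ProperCone ℝ (VSp X) where
  carrier := hatP P
  add_mem' {p q} hp hq := by
    have hmid := hP.2 hp hq (by norm_num : (0 : ℝ) ≤ 1 / 2) (by norm_num : (0 : ℝ) ≤ 1 / 2)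
      (by norm_num)
    simpa [← smul_add, smul_smul] using smul_mem_hatP (by norm_num : (0 : ℝ) ≤ 2) hmid
  zero_mem' := h0
  smul_mem' c p hp := by simpa [NNReal.smul_def] using smul_mem_hatP c.2 hp
  isClosed' := isClosed_closure

theorem IsKelvinPlanck.exists_cdForm_of_not_mem (hP : IsKelvinPlanck P) {p : VSp X}
    (hp : p ∉ hatP P) : ∃ g h : C(X, ℝ), (∀ k ∈ hatP P, 0 ≤ cdForm g h k) ∧ cdForm g h p < 0 := by
  obtain ⟨f, hf, hfp⟩ := (hP.1.properCone hP.zero_mem_hatP).hyperplane_separation_point hp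
  obtain ⟨g, h, rfl⟩ := exists_eq_cdForm f
  exact ⟨g, h, hf, hfp⟩

theorem exists_pos_forall_add_mul_pos [CompactSpace X] {β : C(X, ℝ)} (hβ : ∀ x, 0 < β x)
    (h : C(X, ℝ)) : ∃ ε : ℝ, 0 < ε ∧ ∀ x, 0 < β x + ε * h x := by
  rcases isEmpty_or_nonempty X with hX | hX
  · exact ⟨1, one_pos, fun x => isEmptyElim x⟩
  obtain ⟨x₀, -, hx₀⟩ := isCompact_univ.exists_isMinOn univ_nonempty β.continuous.continuousOn
  have hε : 0 < β x₀ / (‖h‖ + 1) := div_pos (hβ x₀) (by positivity)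
  refine ⟨β x₀ / (‖h‖ + 1), hε, fun x => ?_⟩
  have hhx : -‖h‖ ≤ h x := neg_le_of_abs_le (h.norm_coe_le_norm x)
  have hmin : β x₀ ≤ β x := hx₀ (mem_univ x)
  have hεh : β x₀ / (‖h‖ + 1) * ‖h‖ < β x₀ := by
    rw [div_mul_eq_mul_div, div_lt_iff₀ (by positivity)]
    nlinarith [hβ x₀]
  nlinarith [mul_le_mul_of_nonneg_left hhx hε.le]

theorem exists_isCDPair_of_pos {η β : C(X, ℝ)} (hβ : ∀ x, 0 < β x)
    (hP : ∀ p ∈ P, p.2 β ≤ p.1 η) : ∃ T : C(X, ℝ), (∀ x, β x = (T x)⁻¹) ∧ IsCDPair P η T := by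
  refine ⟨⟨fun x => (β x)⁻¹, β.continuous.inv₀ fun x => (hβ x).ne'⟩, fun x => (inv_inv _).symm,
    fun x => inv_pos.mpr (hβ x), fun β' hβ' p hp => ?_⟩
  obtain rfl : β' = β := ContinuousMap.ext fun x => by simp [hβ' x]
  exact hP p hp

def IsEssentiallyUniqueCDPair (P : Set (VSp X)) (η₀ T₀ : C(X, ℝ)) : Prop :=
  ∀ η T : C(X, ℝ), IsCDPair P η T → ∃ α b : ℝ, 0 < α ∧ T = α • T₀ ∧
    η = α⁻¹ • η₀ + ContinuousMap.const X b

theorem IsEssentiallyUniqueCDPair.exists_cdForm_eq [CompactSpace X] {η₀ T₀ β₀ : C(X, ℝ)}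
    (huniq : IsEssentiallyUniqueCDPair P η₀ T₀) (hpair : IsCDPair P η₀ T₀)
    (hβ₀ : ∀ x, β₀ x = (T₀ x)⁻¹) {g h : C(X, ℝ)} (hgh : ∀ p ∈ P, 0 ≤ cdForm g h p) :
    ∃ c b : ℝ, ∀ p : VSp X, cdForm g h p = c * cdForm η₀ β₀ p + b * p.1 1 := by
  have hβ₀pos (x : X) : 0 < β₀ x := (hβ₀ x).symm ▸ inv_pos.mpr (hpair.1 x)
  obtain ⟨ε, hε, hpos⟩ := exists_pos_forall_add_mul_pos hβ₀pos h
  obtain ⟨T, hT, hCD⟩ := exists_isCDPair_of_pos (P := P) (η := η₀ + ε • g) (β := β₀ + ε • h)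
    (by simpa using hpos) fun p hp => by
      have := mul_nonneg hε.le (hgh p hp)
      simp only [cdForm_apply, map_add, map_smul, smul_eq_mul] at this ⊢
      linarith [hpair.2 β₀ hβ₀ p hp]
  obtain ⟨α, b, hα, rfl, hη⟩ := huniq _ _ hCD
  have hh : ε • h = (α⁻¹ - 1) • β₀ := ContinuousMap.ext fun x => by
    have := hT x
    simp only [ContinuousMap.add_apply, ContinuousMap.smul_apply, smul_eq_mul, mul_inv,
      ← hβ₀ x] at this ⊢
    linarith
  have hg : ε • g = (α⁻¹ - 1) • η₀ + b • 1 := ContinuousMap.ext fun x => by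
    have := congrArg (· x) hη
    simp only [ContinuousMap.add_apply, ContinuousMap.smul_apply, smul_eq_mul,
      ContinuousMap.const_apply, ContinuousMap.one_apply] at this ⊢
    linarith
  refine ⟨(α⁻¹ - 1) / ε, b / ε, fun p => ?_⟩
  have e₁ := congrArg p.2 hh
  have e₂ := congrArg p.1 hg
  simp only [map_add, map_smul, smul_eq_mul, cdForm_apply] at e₁ e₂ ⊢
  rw [div_mul_eq_mul_div, div_mul_eq_mul_div, ← add_div, eq_div_iff hε.ne']
  linear_combination e₂ - e₁

theorem mem_hatP_of_forall_mul_nonneg [CompactSpace X] {η₀ T₀ β₀ : C(X, ℝ)}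
    (hP : IsKelvinPlanck P) (hpair : IsCDPair P η₀ T₀)
    (hβ₀ : ∀ x, β₀ x = (T₀ x)⁻¹) (huniq : IsEssentiallyUniqueCDPair P η₀ T₀) {p : VSp X}
    (hp₁ : p.1 1 = 0)
    (hp : ∀ c : ℝ, (∀ k ∈ hatP P, 0 ≤ c * cdForm η₀ β₀ k) → 0 ≤ c * cdForm η₀ β₀ p) :
    p ∈ hatP P := by
  by_contra hpP
  obtain ⟨g, h, hgh, hghp⟩ := hP.exists_cdForm_of_not_mem hpP
  obtain ⟨c, b, hcb⟩ := huniq.exists_cdForm_eq hpair hβ₀ fun k hk => hgh k (subset_hatP P hk)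
  have hc : ∀ k ∈ hatP P, 0 ≤ c * cdForm η₀ β₀ k := fun k hk => by
    simpa only [hcb, hP.1.mass_eq_zero hk, mul_zero, add_zero] using hgh k hk
  rw [hcb, hp₁, mul_zero, add_zero] at hghp
  exact (hp c hc).not_gt hghp

theorem mem_hatP_and_neg_mem_iff [CompactSpace X] {η₀ T₀ β₀ : C(X, ℝ)}
    (hP : IsKelvinPlanck P) (hpair : IsCDPair P η₀ T₀)
    (hβ₀ : ∀ x, β₀ x = (T₀ x)⁻¹) (huniq : IsEssentiallyUniqueCDPair P η₀ T₀) {p : VSp X} :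
    p ∈ hatP P ∧ -p ∈ hatP P ↔ p.1 1 = 0 ∧ p.1 η₀ = p.2 β₀ := by
  have hS {k : VSp X} (hk : k ∈ hatP P) : 0 ≤ cdForm η₀ β₀ k :=
    sub_nonneg.mpr (hpair.le_of_mem_hatP hβ₀ hk)
  constructor
  · rintro ⟨hp, hnp⟩
    have hS₀ : cdForm η₀ β₀ p = 0 :=
      le_antisymm (by simpa only [map_neg, neg_nonneg] using hS hnp) (hS hp)
    exact ⟨hP.1.mass_eq_zero hp, sub_eq_zero.mp hS₀⟩
  · rintro ⟨hp₁, hpS⟩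
    have hS₀ : cdForm η₀ β₀ p = 0 := sub_eq_zero.mpr hpS
    have hnS₀ : cdForm η₀ β₀ (-p) = 0 := by rw [map_neg, hS₀, neg_zero]
    exact ⟨mem_hatP_of_forall_mul_nonneg hP hpair hβ₀ huniq hp₁ fun c _ => by rw [hS₀, mul_zero],
      mem_hatP_of_forall_mul_nonneg hP hpair hβ₀ huniq (neg_eq_zero.mpr hp₁) fun c _ => by
        rw [hnS₀, mul_zero]⟩

end Thermodynamics

theorem cd_uniqueness_and_irreversibility_general
    {X : Type*} [TopologicalSpace X] [CompactSpace X]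
    (P : Set (VSp X)) (hP : IsKelvinPlanck P)
    (η₀ T₀ β₀ : C(X, ℝ)) (hpair : IsCDPair P η₀ T₀) (hβ₀ : ∀ x, β₀ x = (T₀ x)⁻¹)
    (huniq : ∀ η T : C(X, ℝ), IsCDPair P η T → ∃ α b : ℝ, 0 < α ∧ T = α • T₀ ∧
      η = α⁻¹ • η₀ + ContinuousMap.const X b) :
    ({p : VSp X | p ∈ hatP P ∧ -p ∈ hatP P} =
      {p : VSp X | p.1 (1 : C(X, ℝ)) = 0 ∧ p.1 η₀ = p.2 β₀}) ∧
    ((∃ p : VSp X, p.1 (1 : C(X, ℝ)) = 0 ∧ p.2 β₀ < p.1 η₀ ∧ p ∈ hatP P) →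
      ∀ p : VSp X, p.1 (1 : C(X, ℝ)) = 0 → p.2 β₀ < p.1 η₀ → p ∈ hatP P) ∧
    ((∃ p ∈ P, ¬ (p ∈ hatP P ∧ -p ∈ hatP P)) →
      ∀ p : VSp X, p.1 (1 : C(X, ℝ)) = 0 → p.2 β₀ ≤ p.1 η₀ → p ∈ hatP P) := by
  have hrev : {p : VSp X | p ∈ hatP P ∧ -p ∈ hatP P} =
      {p : VSp X | p.1 (1 : C(X, ℝ)) = 0 ∧ p.1 η₀ = p.2 β₀} :=
    Set.ext fun p => mem_hatP_and_neg_mem_iff hP hpair hβ₀ huniq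
  have hstrict : (∃ p : VSp X, p.1 (1 : C(X, ℝ)) = 0 ∧ p.2 β₀ < p.1 η₀ ∧ p ∈ hatP P) →
      ∀ p : VSp X, p.1 (1 : C(X, ℝ)) = 0 → p.2 β₀ < p.1 η₀ → p ∈ hatP P := by
    rintro ⟨q, -, hqS, hq⟩ p hp₁ hpS
    refine mem_hatP_of_forall_mul_nonneg hP hpair hβ₀ huniq hp₁ fun c hc => ?_
    have hc₀ : 0 ≤ c := nonneg_of_mul_nonneg_left (hc q hq) (sub_pos.mpr hqS)
    exact mul_nonneg hc₀ (sub_nonneg.mpr hpS.le)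
  refine ⟨hrev, hstrict, ?_⟩
  rintro ⟨q, hqP, hq_irr⟩ p hp₁ hpS
  have hqS : q.2 β₀ < q.1 η₀ := (hpair.le_of_mem_hatP hβ₀ (subset_hatP P hqP)).lt_of_ne
    fun h => hq_irr (hrev.ge ⟨hP.1.1 q hqP, h.symm⟩)
  rcases hpS.lt_or_eq with hlt | heq
  · exact hstrict ⟨q, hP.1.1 q hqP, hqS, subset_hatP P hqP⟩ p hp₁ hlt
  · exact (hrev.ge ⟨hp₁, heq.symm⟩).1

/-- **Corollary.** Let `(X, P)` be a Kelvin–Planck theory with an essentially unique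
Clausius–Duhem pair `(η⁰, T⁰)` (with `β⁰ = 1/T⁰`).  Then: (1) the reversible
elements of `\hat P` are exactly the `(Δm, q) ∈ V(X)` with
`∫ η⁰ dΔm = ∫ (1/T⁰) dq`; (2) if one member of
`{(Δm, q) ∈ V(X) : ∫ η⁰ dΔm > ∫ (1/T⁰) dq}` lies in `\hat P` then all do;
(3) if `P` contains an irreversible process, then `\hat P` contains every member of
`V(X)` with `∫ η⁰ dΔm ≥ ∫ (1/T⁰) dq`. -/
theorem cd_uniqueness_and_irreversibility
    {X : Type*} [TopologicalSpace X] [CompactSpace X] [T2Space X]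
    (P : Set (VSp X)) (hP : IsKelvinPlanck P)
    (η₀ T₀ β₀ : C(X, ℝ)) (hpair : IsCDPair P η₀ T₀) (hβ₀ : ∀ x, β₀ x = (T₀ x)⁻¹)
    (huniq : ∀ η T : C(X, ℝ), IsCDPair P η T → ∃ α b : ℝ, 0 < α ∧ T = α • T₀ ∧
      η = α⁻¹ • η₀ + ContinuousMap.const X b) :
    ({p : VSp X | p ∈ hatP P ∧ -p ∈ hatP P} =
      {p : VSp X | p.1 (1 : C(X, ℝ)) = 0 ∧ p.1 η₀ = p.2 β₀}) ∧
    ((∃ p : VSp X, p.1 (1 : C(X, ℝ)) = 0 ∧ p.2 β₀ < p.1 η₀ ∧ p ∈ hatP P) →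
      ∀ p : VSp X, p.1 (1 : C(X, ℝ)) = 0 → p.2 β₀ < p.1 η₀ → p ∈ hatP P) ∧
    ((∃ p ∈ P, ¬ (p ∈ hatP P ∧ -p ∈ hatP P)) →
      ∀ p : VSp X, p.1 (1 : C(X, ℝ)) = 0 → p.2 β₀ ≤ p.1 η₀ → p ∈ hatP P) :=
  cd_uniqueness_and_irreversibility_general P hP η₀ T₀ β₀ hpair hβ₀ huniq
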